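/- arXiv:1103.5082 — 2 statements merged into one kernel-verified Lean document; each statement's English description precedes it below -/
import Mathlib

section
/- If the relative relation R/S (defined as S* ∘ R ∘ S*) is well-founded (terminating), then every (R ∪ S)-derivation contains only finitely many R-steps; more precisely, if a is in the domain, then along any sequence of (R ∪ S)-steps starting from a, the number of R-steps is bounded by the derivation height of a with respect to R/S, provided R/S is finitely branching and terminating. -/
/-- `Iter r n a b` : `a` rewrites to `b` in exactly `n` `r`-steps. -/
def Iter {α : Type*} (r : α → α → Prop) : ℕ → α → α → Prop
  | 0, a, b => a = b
  | n + 1, a, c => ∃ b, r a b ∧ Iter r n b c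

/-- The relative rewrite relation `R/S := S* ∘ R ∘ S*`. -/
def RelMod {α : Type*} (R S : α → α → Prop) (a b : α) : Prop :=
  ∃ c d, Relation.ReflTransGen S a c ∧ R c d ∧ Relation.ReflTransGen S d b

/-- Derivation height with respect to `R/S`. -/
noncomputable def dh {α : Type*} (r : α → α → Prop) (s : α) : ℕ :=
  sSup {n : ℕ | ∃ t, Iter r n s t}

lemma iter_snoc {α : Type*} {r : α → α → Prop} :
    ∀ {n a b c}, Iter r n a b → r b c → Iter r (n + 1) a c := by
  intro n
  induction n with
  | zero => intro a b c h hr; cases h; exact ⟨c, hr, rfl⟩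
  | succ n ih =>
    intro a b c h hr
    obtain ⟨x, hax, hx⟩ := h
    exact ⟨x, hax, ih hx hr⟩

lemma iter_bdd {α : Type*} {r : α → α → Prop}
    (hterm : WellFounded (fun a b => r b a))
    (hfb : ∀ a : α, {b | r a b}.Finite) (a : α) :
    ∃ B, ∀ n t, Iter r n a t → n ≤ B := by
  classical
  induction a using hterm.induction with
  | _ a ih =>
    refine ⟨1 + (hfb a).toFinset.sup
      (fun b => if h : r a b then (ih b h).choose else 0), ?_⟩
    intro n t hit
    cases n with
    | zero => omega
    | succ n =>
      obtain ⟨b, hab, hb⟩ := hit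
      have h1 : n ≤ (ih b hab).choose := (ih b hab).choose_spec n t hb
      have hmem : b ∈ (hfb a).toFinset := (hfb a).mem_toFinset.mpr hab
      have h2 : (if h : r a b then (ih b h).choose else 0) ≤
          (hfb a).toFinset.sup (fun b => if h : r a b then (ih b h).choose else 0) :=
        Finset.le_sup (f := fun b => if h : r a b then (ih b h).choose else 0) hmem
      rw [dif_pos hab] at h2
      omega

/-- If `R/S` is finitely branching and terminating, then along any finite sequence of
`(R ∪ S)`-steps starting from `a`, the number of `R`-steps is bounded by the
derivation height of `a` with respect to `R/S`. -/
theorem relMod_bounds_R_steps {α : Type*} (R S : α → α → Prop)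
    (hterm : WellFounded (fun a b => RelMod R S b a))
    (hfb : ∀ a : α, {b | RelMod R S a b}.Finite)
    (a : α) (N : ℕ) (f : ℕ → α) (hf0 : f 0 = a)
    (hstep : ∀ i < N, R (f i) (f (i + 1)) ∨ S (f i) (f (i + 1))) :
    Set.ncard {i : ℕ | i < N ∧ R (f i) (f (i + 1))} ≤ dh (RelMod R S) a := by
  classical
  have key : ∀ M ≤ N, ∃ c,
      Iter (RelMod R S)
        ((Finset.range M).filter (fun i => R (f i) (f (i + 1)))).card a c ∧
      Relation.ReflTransGen S c (f M) := by
    intro M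
    induction M with
    | zero =>
      intro _
      refine ⟨a, ?_, ?_⟩
      · simp [Iter]
      · rw [hf0]
    | succ M ihM =>
      intro hMN
      obtain ⟨c, hIter, hS⟩ := ihM (by omega)
      have hst := hstep M (by omega)
      by_cases hR : R (f M) (f (M + 1))
      · have hcard : ((Finset.range (M + 1)).filter (fun i => R (f i) (f (i + 1)))).card
            = ((Finset.range M).filter (fun i => R (f i) (f (i + 1)))).card + 1 := by
          rw [Finset.range_add_one, Finset.filter_insert, if_pos hR,
            Finset.card_insert_of_notMem (by simp)]
        refine ⟨f (M + 1), ?_, Relation.ReflTransGen.refl⟩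
        rw [hcard]
        exact iter_snoc hIter ⟨f M, f (M + 1), hS, hR, Relation.ReflTransGen.refl⟩
      · have hcard : ((Finset.range (M + 1)).filter (fun i => R (f i) (f (i + 1)))).card
            = ((Finset.range M).filter (fun i => R (f i) (f (i + 1)))).card := by
          rw [Finset.range_add_one, Finset.filter_insert, if_neg hR]
        refine ⟨c, by rw [hcard]; exact hIter, hS.tail (hst.resolve_left hR)⟩
  obtain ⟨c, hIter, _⟩ := key N le_rfl
  have hset : {i : ℕ | i < N ∧ R (f i) (f (i + 1))}
      = ↑((Finset.range N).filter (fun i => R (f i) (f (i + 1)))) := by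
    ext i; simp [Finset.mem_filter, Finset.mem_range]
  rw [hset, Set.ncard_coe_finset]
  obtain ⟨B, hB⟩ := iter_bdd hterm hfb a
  exact le_csSup ⟨B, fun n hn => by obtain ⟨t, ht⟩ := hn; exact hB n t ht⟩ ⟨c, hIter⟩
end

section
/- If → is a terminating rewrite relation on terms of a first-order signature (closed under contexts), then → ∪ ⊳ is terminating, where ⊳ is the proper-subterm relation. -/
/-- First-order terms over a signature `F` with arity function `ar`
(ground terms; finite rooted labeled trees). -/
inductive Term (F : Type*) (ar : F → ℕ) : Type _
  | node : (f : F) → (Fin (ar f) → Term F ar) → Term F ar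

/-- `DirectSubterm t s` : `t` is an immediate (direct) subterm of `s`. -/
def DirectSubterm {F : Type*} {ar : F → ℕ} (t s : Term F ar) : Prop :=
  ∃ (f : F) (args : Fin (ar f) → Term F ar) (i : Fin (ar f)),
    s = Term.node f args ∧ t = args i

/-- `ProperSubterm t s` : `t` is a proper subterm of `s` (so `s ⊳ t`). -/
def ProperSubterm {F : Type*} {ar : F → ℕ} : Term F ar → Term F ar → Prop :=
  Relation.TransGen DirectSubterm

lemma directSubterm_wf {F : Type*} {ar : F → ℕ} :
    WellFounded (@DirectSubterm F ar) := by
  constructor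
  intro t
  induction t with
  | node f args ih =>
    constructor
    rintro u ⟨g, as, i, heq, rfl⟩
    injection heq with h1 h2
    subst h1
    cases eq_of_heq h2
    exact ih i

lemma properSubterm_wf {F : Type*} {ar : F → ℕ} :
    WellFounded (@ProperSubterm F ar) :=
  directSubterm_wf.transGen

lemma lift1 {F : Type*} {ar : F → ℕ} {r : Term F ar → Term F ar → Prop}
    (hctx : ∀ (f : F) (args : Fin (ar f) → Term F ar) (i : Fin (ar f)) (a b : Term F ar),
      r a b → r (Term.node f (Function.update args i a)) (Term.node f (Function.update args i b)))
    {t s u : Term F ar} (h : DirectSubterm t s) (hr : r t u) :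
    ∃ s', r s s' ∧ DirectSubterm u s' := by
  obtain ⟨f, args, i, rfl, rfl⟩ := h
  refine ⟨Term.node f (Function.update args i u), ?_, f, _, i, rfl, ?_⟩
  · have := hctx f args i (args i) u hr
    simpa using this
  · simp

lemma lift {F : Type*} {ar : F → ℕ} {r : Term F ar → Term F ar → Prop}
    (hctx : ∀ (f : F) (args : Fin (ar f) → Term F ar) (i : Fin (ar f)) (a b : Term F ar),
      r a b → r (Term.node f (Function.update args i a)) (Term.node f (Function.update args i b)))
    {t s u : Term F ar} (h : ProperSubterm t s) (hr : r t u) :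
    ∃ s', r s s' ∧ ProperSubterm u s' := by
  induction h generalizing u with
  | single hd =>
    obtain ⟨s', h1, h2⟩ := lift1 hctx hd hr
    exact ⟨s', h1, Relation.TransGen.single h2⟩
  | tail _ hd ih =>
    obtain ⟨b', h1, h2⟩ := ih hr
    obtain ⟨s', h3, h4⟩ := lift1 hctx hd h1
    exact ⟨s', h3, h2.trans (Relation.TransGen.single h4)⟩

/-- If `→` is a terminating rewrite relation on terms (closed under contexts),
then `→ ∪ ⊳` is terminating, where `s ⊳ t` means `t` is a proper subterm of `s`. -/
theorem union_properSubterm_terminating {F : Type*} {ar : F → ℕ}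
    (r : Term F ar → Term F ar → Prop)
    (hctx : ∀ (f : F) (args : Fin (ar f) → Term F ar) (i : Fin (ar f)) (a b : Term F ar),
      r a b → r (Term.node f (Function.update args i a)) (Term.node f (Function.update args i b)))
    (hterm : WellFounded (fun a b => r b a)) :
    WellFounded (fun a b => r b a ∨ ProperSubterm a b) := by
  set U := fun a b => r b a ∨ ProperSubterm a b with hU
  have main : ∀ s, (∀ t, ProperSubterm t s ∨ t = s → Acc U t) := by
    intro s
    induction s using hterm.induction with
    | _ s ihs =>
      intro t ht
      induction t using properSubterm_wf.induction with
      | _ t iht =>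
        constructor
        rintro u (hu | hu)
        · -- r t u
          rcases ht with ht | rfl
          · obtain ⟨s', h1, h2⟩ := lift hctx ht hu
            exact ihs s' h1 u (Or.inl h2)
          · exact ihs u hu u (Or.inr rfl)
        · -- u proper subterm of t
          refine iht u hu ?_
          rcases ht with ht | rfl
          · exact Or.inl (hu.trans ht)
          · exact Or.inl hu
  constructor
  exact fun s => main s s (Or.inr rfl)
end
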